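/- arXiv:2107.01989 — 2 statements merged into one kernel-verified Lean document; each statement's English description precedes it below -/
import Mathlib

section
/- Let u : ℝ² → ℝ be C² and q a nondegenerate critical point of u (i.e. ∇u(q) = 0 and det Hess u(q) ≠ 0). Then q is an isolated zero of the vector field T(p) = (u_yy·u_x - u_xy·u_y, u_xx·u_y - u_xy·u_x)(p), and the local Brouwer degree (index) of T at q equals 1. -/
open Real

/-- Partial derivative in the first (x) variable. -/
noncomputable def px (u : ℝ → ℝ → ℝ) : ℝ → ℝ → ℝ := fun x y => deriv (fun t => u t y) x

/-- Partial derivative in the second (y) variable. -/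
noncomputable def py (u : ℝ → ℝ → ℝ) : ℝ → ℝ → ℝ := fun x y => deriv (fun t => u x t) y

/-!
At a critical point `q` the field `T = adj(Hess u) ∇u` vanishes, and its derivative there only
sees the derivative of `∇u`, which is `Hess u(q)` (by symmetry of second derivatives). Hence
`DT(q) = adj(H) H = (det H) I` with `H = Hess u(q)`: the Jacobian of `T` at `q` is `(det H)² > 0`,
and since `DT(q)` is invertible the inverse function theorem makes `q` an isolated zero.
-/

open Function ContinuousLinearMap Topology

section PartialDerivatives

variable {f : ℝ → ℝ → ℝ} {p : ℝ × ℝ}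

theorem px_eq_of_hasFDerivAt {L : ℝ × ℝ →L[ℝ] ℝ} (hf : HasFDerivAt (uncurry f) L p) :
    px f p.1 p.2 = L (1, 0) :=
  (hf.comp_hasDerivAt (f := fun t => (t, p.2)) p.1
    ((hasDerivAt_id p.1).prodMk (hasDerivAt_const p.1 p.2))).deriv

theorem py_eq_of_hasFDerivAt {L : ℝ × ℝ →L[ℝ] ℝ} (hf : HasFDerivAt (uncurry f) L p) :
    py f p.1 p.2 = L (0, 1) :=
  (hf.comp_hasDerivAt (f := fun t => (p.1, t)) p.2
    ((hasDerivAt_const p.2 p.1).prodMk (hasDerivAt_id p.2))).deriv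

theorem fderiv_uncurry (hf : DifferentiableAt ℝ (uncurry f) p) :
    fderiv ℝ (uncurry f) p = px f p.1 p.2 • fst ℝ ℝ ℝ + py f p.1 p.2 • snd ℝ ℝ ℝ := by
  rw [px_eq_of_hasFDerivAt hf.hasFDerivAt, py_eq_of_hasFDerivAt hf.hasFDerivAt]
  ext <;> simp

theorem hasStrictFDerivAt_uncurry (hf : ContDiffAt ℝ 1 (uncurry f) p) :
    HasStrictFDerivAt (uncurry f) (px f p.1 p.2 • fst ℝ ℝ ℝ + py f p.1 p.2 • snd ℝ ℝ ℝ) p := by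
  rw [← fderiv_uncurry (hf.differentiableAt one_ne_zero)]
  exact hf.hasStrictFDerivAt one_ne_zero

theorem uncurry_px_eq_fderiv (hf : Differentiable ℝ (uncurry f)) :
    uncurry (px f) = fun p => fderiv ℝ (uncurry f) p (1, 0) :=
  funext fun _ => px_eq_of_hasFDerivAt (hf _).hasFDerivAt

theorem uncurry_py_eq_fderiv (hf : Differentiable ℝ (uncurry f)) :
    uncurry (py f) = fun p => fderiv ℝ (uncurry f) p (0, 1) :=
  funext fun _ => py_eq_of_hasFDerivAt (hf _).hasFDerivAt

theorem ContDiff.uncurry_px {n : WithTop ℕ∞} (hf : ContDiff ℝ (n + 1) (uncurry f)) :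
    ContDiff ℝ n (uncurry (px f)) := by
  rw [uncurry_px_eq_fderiv (hf.differentiable (by simp))]
  exact (hf.fderiv_right le_rfl).clm_apply contDiff_const

theorem ContDiff.uncurry_py {n : WithTop ℕ∞} (hf : ContDiff ℝ (n + 1) (uncurry f)) :
    ContDiff ℝ n (uncurry (py f)) := by
  rw [uncurry_py_eq_fderiv (hf.differentiable (by simp))]
  exact (hf.fderiv_right le_rfl).clm_apply contDiff_const

theorem py_px_eq_px_py (hf : ContDiff ℝ 2 (uncurry f)) : py (px f) = px (py f) := by
  have hd : Differentiable ℝ (uncurry f) := hf.differentiable two_ne_zero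
  have hd2 : Differentiable ℝ (fderiv ℝ (uncurry f)) :=
    (hf.fderiv_right (m := 1) le_rfl).differentiable one_ne_zero
  have hsecond (v w : ℝ × ℝ) (x : ℝ × ℝ) :
      fderiv ℝ (fun p => fderiv ℝ (uncurry f) p w) x v =
        fderiv ℝ (fderiv ℝ (uncurry f)) x v w := by
    rw [fderiv_clm_apply (hd2 x) (differentiableAt_const w)]
    simp
  have hpx : Differentiable ℝ (uncurry (px f)) :=
    (ContDiff.uncurry_px (n := 1) hf).differentiable one_ne_zero
  have hpy : Differentiable ℝ (uncurry (py f)) :=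
    (ContDiff.uncurry_py (n := 1) hf).differentiable one_ne_zero
  ext x y
  calc py (px f) x y = fderiv ℝ (uncurry (px f)) (x, y) (0, 1) :=
        py_eq_of_hasFDerivAt (hpx (x, y)).hasFDerivAt
    _ = fderiv ℝ (fderiv ℝ (uncurry f)) (x, y) (0, 1) (1, 0) := by
        rw [uncurry_px_eq_fderiv hd, hsecond]
    _ = fderiv ℝ (fderiv ℝ (uncurry f)) (x, y) (1, 0) (0, 1) :=
        hf.contDiffAt.isSymmSndFDerivAt (by simp) _ _
    _ = fderiv ℝ (uncurry (py f)) (x, y) (1, 0) := by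
        rw [uncurry_py_eq_fderiv hd, hsecond]
    _ = px (py f) x y := (px_eq_of_hasFDerivAt (hpy (x, y)).hasFDerivAt).symm

end PartialDerivatives

noncomputable def adjHessGrad (u : ℝ → ℝ → ℝ) (p : ℝ × ℝ) : ℝ × ℝ :=
  (py (py u) p.1 p.2 * px u p.1 p.2 - py (px u) p.1 p.2 * py u p.1 p.2,
    px (px u) p.1 p.2 * py u p.1 p.2 - py (px u) p.1 p.2 * px u p.1 p.2)

noncomputable def hessDet (u : ℝ → ℝ → ℝ) (x y : ℝ) : ℝ :=
  px (px u) x y * py (py u) x y - py (px u) x y ^ 2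

theorem hasStrictFDerivAt_adjHessGrad {u : ℝ → ℝ → ℝ} (hu : ContDiff ℝ 3 (uncurry u))
    {q : ℝ × ℝ} (hcrit : px u q.1 q.2 = 0 ∧ py u q.1 q.2 = 0) :
    HasStrictFDerivAt (adjHessGrad u) (hessDet u q.1 q.2 • ContinuousLinearMap.id ℝ (ℝ × ℝ)) q := by
  have hux : ContDiff ℝ 2 (uncurry (px u)) := ContDiff.uncurry_px (n := 2) hu
  have huy : ContDiff ℝ 2 (uncurry (py u)) := ContDiff.uncurry_py (n := 2) hu
  have hgx := hasStrictFDerivAt_uncurry (hux.of_le one_le_two).contDiffAt (p := q)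
  have hgy := hasStrictFDerivAt_uncurry (huy.of_le one_le_two).contDiffAt (p := q)
  have hstrict {g : ℝ → ℝ → ℝ} (hg : ContDiff ℝ 1 (uncurry g)) :
      HasStrictFDerivAt (uncurry g) (fderiv ℝ (uncurry g) q) q :=
    hg.contDiffAt.hasStrictFDerivAt one_ne_zero
  have hxx := hstrict (ContDiff.uncurry_px (n := 1) hux)
  have hxy := hstrict (ContDiff.uncurry_py (n := 1) hux)
  have hyy := hstrict (ContDiff.uncurry_py (n := 1) huy)
  have hprod := (hyy.mul hgx |>.sub (hxy.mul hgy)).prodMk (hxx.mul hgy |>.sub (hxy.mul hgx))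
  refine hprod.congr_fderiv ?_
  rw [← py_px_eq_px_py (hu.of_le (by norm_num))]
  obtain ⟨hx, hy⟩ := hcrit
  ext <;> simp [uncurry, hx, hy, hessDet] <;> ring

theorem HasStrictFDerivAt.eventually_eq_of_apply_eq {𝕜 E F : Type*} [NontriviallyNormedField 𝕜]
    [NormedAddCommGroup E] [NormedSpace 𝕜 E] [CompleteSpace E]
    [NormedAddCommGroup F] [NormedSpace 𝕜 F] {f : E → F} {f' : E ≃L[𝕜] F} {a : E}
    (hf : HasStrictFDerivAt f (f' : E →L[𝕜] F) a) : ∀ᶠ x in 𝓝 a, f x = f a → x = a := by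
  filter_upwards [hf.eventually_left_inverse] with x hx hfx
  rw [← hx, hfx, hf.localInverse_apply_image]

theorem HasStrictFDerivAt.eventually_eq_of_apply_eq_of_smul_id {E : Type*}
    [NormedAddCommGroup E] [NormedSpace ℝ E] [CompleteSpace E] {f : E → E} {c : ℝ} {a : E}
    (hc : c ≠ 0) (hf : HasStrictFDerivAt f (c • ContinuousLinearMap.id ℝ E) a) :
    ∀ᶠ x in 𝓝 a, f x = f a → x = a := by
  refine HasStrictFDerivAt.eventually_eq_of_apply_eq
    (f' := ContinuousLinearEquiv.smulLeft (R₁ := ℝ) (Units.mk0 c hc)) ?_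
  convert hf
  ext
  simp

theorem jacobian_eq_sq_of_hasFDerivAt_smul_id {f g : ℝ → ℝ → ℝ} {q : ℝ × ℝ} {c : ℝ}
    (h : HasFDerivAt (fun p => (f p.1 p.2, g p.1 p.2)) (c • ContinuousLinearMap.id ℝ (ℝ × ℝ)) q) :
    px f q.1 q.2 * py g q.1 q.2 - py f q.1 q.2 * px g q.1 q.2 = c ^ 2 := by
  have hf := hasFDerivAt_fst.comp q h
  have hg := hasFDerivAt_snd.comp q h
  rw [px_eq_of_hasFDerivAt (f := f) hf, py_eq_of_hasFDerivAt (f := f) hf,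
    px_eq_of_hasFDerivAt (f := g) hg, py_eq_of_hasFDerivAt (f := g) hg]
  simp [sq]

/-- At a nondegenerate critical point q of u, q is an isolated zero of the vector field T and
the index of T at q is 1: since the zero is regular, the index equals the sign of the Jacobian
determinant of T at q, which equals (det Hess u(q))² > 0. -/
theorem stmt4 (u : ℝ → ℝ → ℝ)
    (hu : ContDiff ℝ 3 (fun p : ℝ × ℝ => u p.1 p.2))
    (T1 T2 : ℝ → ℝ → ℝ)
    (hT1 : T1 = fun x y => py (py u) x y * px u x y - py (px u) x y * py u x y)
    (hT2 : T2 = fun x y => px (px u) x y * py u x y - py (px u) x y * px u x y)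
    (q : ℝ × ℝ)
    (hcrit : px u q.1 q.2 = 0 ∧ py u q.1 q.2 = 0)
    (hnd : px (px u) q.1 q.2 * py (py u) q.1 q.2 - py (px u) q.1 q.2 ^ 2 ≠ 0) :
    (∃ ε > (0:ℝ), ∀ p : ℝ × ℝ, dist p q < ε → T1 p.1 p.2 = 0 → T2 p.1 p.2 = 0 → p = q) ∧
    px T1 q.1 q.2 * py T2 q.1 q.2 - py T1 q.1 q.2 * px T2 q.1 q.2 =
      (px (px u) q.1 q.2 * py (py u) q.1 q.2 - py (px u) q.1 q.2 ^ 2) ^ 2 ∧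
    0 < px T1 q.1 q.2 * py T2 q.1 q.2 - py T1 q.1 q.2 * px T2 q.1 q.2 := by
  have hfield : (fun p : ℝ × ℝ => (T1 p.1 p.2, T2 p.1 p.2)) = adjHessGrad u := by
    subst hT1 hT2
    rfl
  have hT := hasStrictFDerivAt_adjHessGrad hu hcrit
  rw [← hfield] at hT
  have hjac := jacobian_eq_sq_of_hasFDerivAt_smul_id hT.hasFDerivAt
  refine ⟨?_, hjac, hjac ▸ pow_two_pos_of_ne_zero hnd⟩
  · obtain ⟨ε, hε, hball⟩ :=
      Metric.eventually_nhds_iff.1 (hT.eventually_eq_of_apply_eq_of_smul_id hnd)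
    have hTq : T1 q.1 q.2 = 0 ∧ T2 q.1 q.2 = 0 := by simp [hT1, hT2, hcrit]
    exact ⟨ε, hε, fun p hp h1 h2 => hball hp (by simp [h1, h2, hTq])⟩
end

section
/- Let D ⊂ ℝ² be a bounded open set, u : ℝ² → ℝ smooth, and T(q) = (u_yy·u_x - u_xy·u_y, u_xx·u_y - u_xy·u_x)(q). Assume every zero of T in D is a nondegenerate critical point of u (in particular det Hess u ≠ 0 at every critical point of u in D, and there are no points of D where ∇u ≠ 0 and det Hess u = 0 simultaneously with T = 0), and 0 ∉ T(∂D). If deg(T, D, 0) = 1, then u has exactly one critical point in D. -/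
open Real

lemma pdx_eq (g : ℝ × ℝ → ℝ) (x y : ℝ) (hg : DifferentiableAt ℝ g (x, y)) :
    px (fun a b => g (a, b)) x y = fderiv ℝ g (x, y) (1, 0) := by
  have h1 : HasDerivAt (fun t : ℝ => (t, y)) ((1:ℝ), (0:ℝ)) x :=
    (hasDerivAt_id x).prodMk (hasDerivAt_const x y)
  exact (hg.hasFDerivAt.comp_hasDerivAt x h1).deriv

lemma pdy_eq (g : ℝ × ℝ → ℝ) (x y : ℝ) (hg : DifferentiableAt ℝ g (x, y)) :
    py (fun a b => g (a, b)) x y = fderiv ℝ g (x, y) (0, 1) := by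
  have h1 : HasDerivAt (fun t : ℝ => (x, t)) ((0:ℝ), (1:ℝ)) y :=
    (hasDerivAt_const y x).prodMk (hasDerivAt_id y)
  exact (hg.hasFDerivAt.comp_hasDerivAt y h1).deriv

lemma fderiv_apply_v (f' : ℝ × ℝ → (ℝ × ℝ →L[ℝ] ℝ)) (h : DifferentiableAt ℝ f' q)
    (v w : ℝ × ℝ) :
    fderiv ℝ (fun r => f' r v) q w = fderiv ℝ f' q w v := by
  rw [fderiv_clm_apply h (differentiableAt_const v)]
  simp

lemma fderiv_comb (a b c d : ℝ × ℝ → ℝ) (q w : ℝ × ℝ)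
    (ha : DifferentiableAt ℝ a q) (hb : DifferentiableAt ℝ b q)
    (hc : DifferentiableAt ℝ c q) (hd : DifferentiableAt ℝ d q)
    (hb0 : b q = 0) (hd0 : d q = 0) :
    fderiv ℝ (fun r => a r * b r - c r * d r) q w
      = a q * fderiv ℝ b q w - c q * fderiv ℝ d q w := by
  rw [fderiv_fun_sub (ha.fun_mul hb) (hc.fun_mul hd), fderiv_fun_mul ha hb, fderiv_fun_mul hc hd, hb0, hd0]
  simp

/-- If every zero of T in D is a nondegenerate critical point of u, 0 ∉ T(∂D), and the degree of
T in D at 0 (computed, as for a regular value, as the sum over the zeros of the signs of the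
Jacobian determinant of T) equals 1, then u has exactly one critical point in D. -/
theorem stmt5 (D : Set (ℝ × ℝ)) (hD : IsOpen D) (hDb : Bornology.IsBounded D)
    (u : ℝ → ℝ → ℝ) (hu : ContDiff ℝ (⊤ : ℕ∞) (fun p : ℝ × ℝ => u p.1 p.2))
    (T1 T2 : ℝ → ℝ → ℝ)
    (hT1 : T1 = fun x y => py (py u) x y * px u x y - py (px u) x y * py u x y)
    (hT2 : T2 = fun x y => px (px u) x y * py u x y - py (px u) x y * px u x y)
    (Z : Finset (ℝ × ℝ))
    (hZ : ∀ p : ℝ × ℝ, p ∈ Z ↔ p ∈ D ∧ T1 p.1 p.2 = 0 ∧ T2 p.1 p.2 = 0)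
    (hnd : ∀ p ∈ Z, px u p.1 p.2 = 0 ∧ py u p.1 p.2 = 0 ∧
      px (px u) p.1 p.2 * py (py u) p.1 p.2 - py (px u) p.1 p.2 ^ 2 ≠ 0)
    (hbd : ∀ p ∈ frontier D, T1 p.1 p.2 ≠ 0 ∨ T2 p.1 p.2 ≠ 0)
    (hdeg : ∑ p ∈ Z, Real.sign
      (px T1 p.1 p.2 * py T2 p.1 p.2 - py T1 p.1 p.2 * px T2 p.1 p.2) = 1) :
    ∃! p : ℝ × ℝ, p ∈ D ∧ px u p.1 p.2 = 0 ∧ py u p.1 p.2 = 0 := by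
  classical
  set F : ℝ × ℝ → ℝ := fun p => u p.1 p.2 with hF_def
  have hF : ContDiff ℝ (⊤ : ℕ∞) F := hu
  set f' : ℝ × ℝ → (ℝ × ℝ →L[ℝ] ℝ) := fderiv ℝ F with hf'_def
  have hf' : ContDiff ℝ (⊤ : ℕ∞) f' := hF.fderiv_right (by simp)
  set f'' := fderiv ℝ f' with hf''_def
  have hf'' : ContDiff ℝ (⊤ : ℕ∞) f'' := hf'.fderiv_right (by simp)
  have hFd : Differentiable ℝ F := hF.differentiable (by simp)
  have hf'd : Differentiable ℝ f' := hf'.differentiable (by simp)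
  set e1 : ℝ × ℝ := (1, 0) with he1
  set e2 : ℝ × ℝ := (0, 1) with he2
  -- first partials
  have hpx : ∀ x y : ℝ, px u x y = f' (x, y) e1 := fun x y =>
    pdx_eq F x y (hFd _)
  have hpy : ∀ x y : ℝ, py u x y = f' (x, y) e2 := fun x y =>
    pdy_eq F x y (hFd _)
  -- the functions q ↦ f' q v are smooth
  have hf'v : ∀ v : ℝ × ℝ, ContDiff ℝ (⊤ : ℕ∞) (fun q => f' q v) := fun v =>
    hf'.clm_apply contDiff_const
  have hf''vw : ∀ v w : ℝ × ℝ, ContDiff ℝ (⊤ : ℕ∞) (fun q => f'' q v w) := fun v w =>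
    (hf''.clm_apply contDiff_const).clm_apply contDiff_const
  -- second partials
  have hsecond : ∀ v : ℝ × ℝ, ∀ x y : ℝ,
      px (fun a b => f' (a, b) v) x y = f'' (x, y) e1 v ∧
      py (fun a b => f' (a, b) v) x y = f'' (x, y) e2 v := by
    intro v x y
    constructor
    · rw [pdx_eq (fun q => f' q v) x y ((hf'v v).differentiable (by simp) _)]
      exact fderiv_apply_v f' (hf'd _) v e1
    · rw [pdy_eq (fun q => f' q v) x y ((hf'v v).differentiable (by simp) _)]
      exact fderiv_apply_v f' (hf'd _) v e2
  have hpxu_eq : px u = fun a b => f' (a, b) e1 := by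
    funext a b; exact hpx a b
  have hpyu_eq : py u = fun a b => f' (a, b) e2 := by
    funext a b; exact hpy a b
  have hpxpx : ∀ x y : ℝ, px (px u) x y = f'' (x, y) e1 e1 := by
    intro x y; rw [hpxu_eq]; exact (hsecond e1 x y).1
  have hpypx : ∀ x y : ℝ, py (px u) x y = f'' (x, y) e2 e1 := by
    intro x y; rw [hpxu_eq]; exact (hsecond e1 x y).2
  have hpxpy : ∀ x y : ℝ, px (py u) x y = f'' (x, y) e1 e2 := by
    intro x y; rw [hpyu_eq]; exact (hsecond e2 x y).1
  have hpypy : ∀ x y : ℝ, py (py u) x y = f'' (x, y) e2 e2 := by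
    intro x y; rw [hpyu_eq]; exact (hsecond e2 x y).2
  -- symmetry of second derivative
  have hsymm : ∀ q : ℝ × ℝ, f'' q e1 e2 = f'' q e2 e1 := fun q =>
    second_derivative_symmetric (f := F) (fun z => (hFd z).hasFDerivAt)
      ((hf'd q).hasFDerivAt) e1 e2
  -- T1, T2 as functions of the pair
  set g1 : ℝ × ℝ → ℝ := fun q => f'' q e2 e2 * f' q e1 - f'' q e2 e1 * f' q e2 with hg1
  set g2 : ℝ × ℝ → ℝ := fun q => f'' q e1 e1 * f' q e2 - f'' q e2 e1 * f' q e1 with hg2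
  have hT1g : T1 = fun a b => g1 (a, b) := by
    funext a b
    rw [hT1]
    simp only [hg1, hpypy, hpx, hpypx, hpy]
  have hT2g : T2 = fun a b => g2 (a, b) := by
    funext a b
    rw [hT2]
    simp only [hg2, hpxpx, hpy, hpypx, hpx]
  have hg1d : Differentiable ℝ g1 :=
    (((hf''vw e2 e2).mul (hf'v e1)).sub ((hf''vw e2 e1).mul (hf'v e2))).differentiable (by simp)
  have hg2d : Differentiable ℝ g2 :=
    (((hf''vw e1 e1).mul (hf'v e2)).sub ((hf''vw e2 e1).mul (hf'v e1))).differentiable (by simp)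
  -- each term in the degree sum is 1
  have hsign : ∀ p ∈ Z, Real.sign
      (px T1 p.1 p.2 * py T2 p.1 p.2 - py T1 p.1 p.2 * px T2 p.1 p.2) = 1 := by
    intro p hp
    obtain ⟨hx0, hy0, hnd0⟩ := hnd p hp
    set q : ℝ × ℝ := (p.1, p.2) with hq
    have hqp : q = p := Prod.ext rfl rfl
    set A := f'' q e1 e1 with hA
    set B := f'' q e2 e1 with hB
    set C := f'' q e2 e2 with hC
    have hx0' : f' q e1 = 0 := by rw [← hpx]; exact hx0
    have hy0' : f' q e2 = 0 := by rw [← hpy]; exact hy0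
    have hABC : A * C - B ^ 2 ≠ 0 := by
      have := hnd0
      rw [hpxpx, hpypy, hpypx] at this
      exact this
    -- derivatives of g1 at q
    have hdg1 : ∀ w, fderiv ℝ g1 q w = C * f'' q w e1 - B * f'' q w e2 := by
      intro w
      have := fderiv_comb (fun r => f'' r e2 e2) (fun r => f' r e1)
        (fun r => f'' r e2 e1) (fun r => f' r e2) q w
        ((hf''vw e2 e2).differentiable (by simp) q) ((hf'v e1).differentiable (by simp) q)
        ((hf''vw e2 e1).differentiable (by simp) q) ((hf'v e2).differentiable (by simp) q)
        hx0' hy0'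
      rw [show g1 = (fun r => (fun r => f'' r e2 e2) r * (fun r => f' r e1) r -
          (fun r => f'' r e2 e1) r * (fun r => f' r e2) r) from rfl, this,
        fderiv_apply_v f' (hf'd q) e1 w, fderiv_apply_v f' (hf'd q) e2 w]
    have hdg2 : ∀ w, fderiv ℝ g2 q w = A * f'' q w e2 - B * f'' q w e1 := by
      intro w
      have := fderiv_comb (fun r => f'' r e1 e1) (fun r => f' r e2)
        (fun r => f'' r e2 e1) (fun r => f' r e1) q w
        ((hf''vw e1 e1).differentiable (by simp) q) ((hf'v e2).differentiable (by simp) q)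
        ((hf''vw e2 e1).differentiable (by simp) q) ((hf'v e1).differentiable (by simp) q)
        hy0' hx0'
      rw [show g2 = (fun r => (fun r => f'' r e1 e1) r * (fun r => f' r e2) r -
          (fun r => f'' r e2 e1) r * (fun r => f' r e1) r) from rfl, this,
        fderiv_apply_v f' (hf'd q) e2 w, fderiv_apply_v f' (hf'd q) e1 w]
    have hpxT1 : px T1 p.1 p.2 = C * A - B * B := by
      rw [hT1g, pdx_eq g1 p.1 p.2 (hg1d _), hdg1 e1, hsymm q, ← hA, ← hB]
    have hpyT1 : py T1 p.1 p.2 = C * B - B * C := by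
      rw [hT1g, pdy_eq g1 p.1 p.2 (hg1d _), hdg1 e2, ← hB, ← hC]
    have hpxT2 : px T2 p.1 p.2 = A * B - B * A := by
      rw [hT2g, pdx_eq g2 p.1 p.2 (hg2d _), hdg2 e1, hsymm q, ← hB, ← hA]
    have hpyT2 : py T2 p.1 p.2 = A * C - B * B := by
      rw [hT2g, pdy_eq g2 p.1 p.2 (hg2d _), hdg2 e2, ← hC, ← hB]
    rw [hpxT1, hpyT1, hpxT2, hpyT2]
    have : (C * A - B * B) * (A * C - B * B) - (C * B - B * C) * (A * B - B * A)
        = (A * C - B ^ 2) ^ 2 := by ring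
    rw [this]
    exact Real.sign_of_pos (by positivity)
  -- hence the sum equals the cardinality
  have hcard : (Z.card : ℝ) = 1 := by
    rw [← hdeg, Finset.sum_congr rfl hsign]
    simp
  have hcard1 : Z.card = 1 := by exact_mod_cast hcard
  obtain ⟨p0, hp0⟩ := Finset.card_eq_one.mp hcard1
  -- critical points in D are exactly the elements of Z
  have hcrit : ∀ p : ℝ × ℝ, (p ∈ D ∧ px u p.1 p.2 = 0 ∧ py u p.1 p.2 = 0) ↔ p ∈ Z := by
    intro p
    constructor
    · rintro ⟨hpD, hx0, hy0⟩
      refine (hZ p).mpr ⟨hpD, ?_, ?_⟩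
      · rw [hT1]; simp only [hx0, hy0, mul_zero, sub_zero]
      · rw [hT2]; simp only [hx0, hy0, mul_zero, sub_zero]
    · intro hp
      obtain ⟨hx0, hy0, _⟩ := hnd p hp
      exact ⟨((hZ p).mp hp).1, hx0, hy0⟩
  refine ⟨p0, ?_, ?_⟩
  · exact (hcrit p0).mpr (by rw [hp0]; exact Finset.mem_singleton_self p0)
  · intro q hq
    have : q ∈ Z := (hcrit q).mp hq
    rw [hp0] at this
    exact Finset.mem_singleton.mp this
end
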